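/- Let C = (G, ℓ) be a tropical curve with connected graph G of genus g = |E|/2 - |V| + 1, let l_1 ≠ l_2 be leaves, let ρ be a simple path from l_1 to l_2, and let b_1, …, b_g be simple loops whose dual 1-forms are linearly independent, with M the (invertible) g × g matrix M_{ij} = ∫_{b_j} w^{b_i}. Then the unique exact 1-form w_{l_1,l_2} on C with residue 1 at l_1, -1 at l_2 and 0 at all other leaves is given by w_{l_1,l_2} = w^ρ - Σ_{i,j=1}^g (∫_{b_i} w^ρ) (M^{-1})_{ij} w^{b_j}. -/

import Mathlib

/-- A graph in the sense of the paper: finite sets of vertices, oriented edges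
(with fixed-point-free reversal involution and target map) and leaves (with
attachment map), together with a positive, reversal-invariant length function. -/
structure TropCurve where
  V : Type
  E : Type
  L : Type
  fintV : Fintype V
  fintE : Fintype E
  fintL : Fintype L
  decV : DecidableEq V
  decE : DecidableEq E
  decL : DecidableEq L
  /-- edge reversal `e ↦ -e` -/
  rev : E → E
  rev_invol : ∀ e, rev (rev e) = e
  rev_ne : ∀ e, rev e ≠ e
  /-- target vertex of an oriented edge -/
  tgt : E → V
  /-- vertex to which a leaf is attached -/
  leafV : L → V
  /-- length function ℓ -/
  len : E → ℝ
  len_pos : ∀ e, 0 < len e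
  len_rev : ∀ e, len (rev e) = len e

attribute [instance] TropCurve.fintV TropCurve.fintE TropCurve.fintL
  TropCurve.decV TropCurve.decE TropCurve.decL

namespace TropCurve

variable (C : TropCurve)

/-- The vertex `v(h)` attached to a half-edge `h ∈ E ⊔ L`. -/
def vert : C.E ⊕ C.L → C.V := Sum.elim C.tgt C.leafV

/-- A 1-form on the tropical curve: `w(-e) = -w(e)` and the balance condition
at every vertex. -/
def IsOneForm (w : C.E ⊕ C.L → ℝ) : Prop :=
  (∀ e : C.E, w (Sum.inl (C.rev e)) = - w (Sum.inl e)) ∧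
  (∀ p : C.V, ∑ h : C.E ⊕ C.L, (if C.vert h = p then w h else 0) = 0)

/-- A path: a finite sequence of oriented edges `h_1 ⋯ h_n` with
`v(h_i) = v(-h_{i+1})`. -/
def IsPath (ρ : List C.E) : Prop :=
  ∀ i : ℕ, (h : i + 1 < ρ.length) →
    C.tgt (ρ.get ⟨i, Nat.lt_of_succ_lt h⟩) = C.tgt (C.rev (ρ.get ⟨i + 1, h⟩))

/-- A loop: a path with `v(h_n) = v(-h_1)`. -/
def IsLoop (ρ : List C.E) : Prop :=
  C.IsPath ρ ∧ ∀ h : ρ ≠ [], C.tgt (ρ.getLast h) = C.tgt (C.rev (ρ.head h))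

/-- `∫_ρ w = Σ_j ℓ(h_j) w(h_j)`. -/
noncomputable def pathIntegral (ρ : List C.E) (w : C.E ⊕ C.L → ℝ) : ℝ :=
  ∑ i : Fin ρ.length, C.len (ρ.get i) * w (Sum.inl (ρ.get i))

/-- A 1-form is exact if its integral along every loop vanishes. -/
def IsExact (w : C.E ⊕ C.L → ℝ) : Prop :=
  C.IsOneForm w ∧ ∀ ρ : List C.E, C.IsLoop ρ → C.pathIntegral ρ w = 0

/-- A 1-form is holomorphic if all its residues vanish. -/
def IsHolo (w : C.E ⊕ C.L → ℝ) : Prop :=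
  C.IsOneForm w ∧ ∀ l : C.L, w (Sum.inr l) = 0

/-- Connectedness of the underlying graph. -/
def Connected : Prop :=
  ∀ p q : C.V, p = q ∨ ∃ ρ : List C.E, ∃ hne : ρ ≠ [],
    C.IsPath ρ ∧ C.tgt (C.rev (ρ.head hne)) = p ∧ C.tgt (ρ.getLast hne) = q

/-- A simple loop: a nonempty loop whose underlying unoriented edges are
pairwise distinct. -/
def IsSimpleLoop (ρ : List C.E) : Prop :=
  C.IsLoop ρ ∧ ρ ≠ [] ∧ List.Pairwise (fun e e' => e ≠ e' ∧ e ≠ C.rev e') ρ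

/-- The dual function `w^ρ` of a loop `ρ`. -/
noncomputable def dualForm (ρ : List C.E) : C.E ⊕ C.L → ℝ :=
  fun h => match h with
  | Sum.inl e => if e ∈ ρ then 1 else if C.rev e ∈ ρ then -1 else 0
  | Sum.inr _ => 0

/-- A simple path from the leaf `l₁` to the leaf `l₂`. -/
def IsSimplePathBetween (ρ : List C.E) (l₁ l₂ : C.L) : Prop :=
  C.IsPath ρ ∧ List.Pairwise (fun e e' => e ≠ e' ∧ e ≠ C.rev e') ρ ∧
  (∀ hne : ρ ≠ [],
    C.tgt (C.rev (ρ.head hne)) = C.leafV l₁ ∧ C.tgt (ρ.getLast hne) = C.leafV l₂) ∧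
  (ρ = [] → C.leafV l₁ = C.leafV l₂)

/-- The dual function `w^ρ` of a simple path `ρ` from `l₁` to `l₂`. -/
noncomputable def dualPathForm (ρ : List C.E) (l₁ l₂ : C.L) : C.E ⊕ C.L → ℝ :=
  fun h => match h with
  | Sum.inl e => if e ∈ ρ then 1 else if C.rev e ∈ ρ then -1 else 0
  | Sum.inr l => if l = l₁ then 1 else if l = l₂ then -1 else 0

/-- The edge pairing `⟨w, w'⟩ = (1/2) Σ_{e ∈ E} ℓ(e) w(e) w'(e)`. -/
noncomputable def pairing (w w' : C.E ⊕ C.L → ℝ) : ℝ :=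
  (1 / 2) * ∑ e : C.E, C.len e * w (Sum.inl e) * w' (Sum.inl e)

/-- The space `Ω(C)` of 1-forms, as a submodule of the functions on `E ⊔ L`. -/
noncomputable def Omega : Submodule ℝ (C.E ⊕ C.L → ℝ) where
  carrier := {w | C.IsOneForm w}
  zero_mem' := by
    refine ⟨fun e => by simp, fun p => ?_⟩
    simp
  add_mem' := by
    rintro a b ⟨ha1, ha2⟩ ⟨hb1, hb2⟩
    refine ⟨fun e => ?_, fun p => ?_⟩
    · have h1 := ha1 e
      have h2 := hb1 e
      simp only [Pi.add_apply] at h1 h2 ⊢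
      linarith
    · have : (∑ h : C.E ⊕ C.L, if C.vert h = p then (a + b) h else 0)
          = (∑ h : C.E ⊕ C.L, if C.vert h = p then a h else 0)
            + (∑ h : C.E ⊕ C.L, if C.vert h = p then b h else 0) := by
        rw [← Finset.sum_add_distrib]
        refine Finset.sum_congr rfl fun h _ => ?_
        by_cases hh : C.vert h = p <;> simp [hh]
      rw [this, ha2 p, hb2 p, add_zero]
  smul_mem' := by
    rintro c a ⟨ha1, ha2⟩
    refine ⟨fun e => ?_, fun p => ?_⟩
    · have h1 := ha1 e
      simp only [Pi.smul_apply, smul_eq_mul] at h1 ⊢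
      rw [h1]; ring
    · have : (∑ h : C.E ⊕ C.L, if C.vert h = p then (c • a) h else 0)
          = c * (∑ h : C.E ⊕ C.L, if C.vert h = p then a h else 0) := by
        rw [Finset.mul_sum]
        refine Finset.sum_congr rfl fun h _ => ?_
        by_cases hh : C.vert h = p <;> simp [hh]
      rw [this, ha2 p, mul_zero]

lemma pathIntegral_add (ρ : List C.E) (a b : C.E ⊕ C.L → ℝ) :
    C.pathIntegral ρ (a + b) = C.pathIntegral ρ a + C.pathIntegral ρ b := by
  simp [pathIntegral, ← Finset.sum_add_distrib, mul_add]

lemma pathIntegral_smul (ρ : List C.E) (c : ℝ) (a : C.E ⊕ C.L → ℝ) :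
    C.pathIntegral ρ (c • a) = c * C.pathIntegral ρ a := by
  simp [pathIntegral, Finset.mul_sum]
  refine Finset.sum_congr rfl fun i _ => by ring

/-- The space `Ω_0(C)` of exact 1-forms. -/
noncomputable def Omega0 : Submodule ℝ (C.E ⊕ C.L → ℝ) where
  carrier := {w | C.IsExact w}
  zero_mem' := by
    refine ⟨(C.Omega).zero_mem, fun ρ _ => ?_⟩
    simp [pathIntegral]
  add_mem' := by
    rintro a b ⟨ha1, ha2⟩ ⟨hb1, hb2⟩
    exact ⟨(C.Omega).add_mem ha1 hb1,
      fun ρ hρ => by rw [C.pathIntegral_add, ha2 ρ hρ, hb2 ρ hρ, add_zero]⟩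
  smul_mem' := by
    rintro c a ⟨ha1, ha2⟩
    exact ⟨(C.Omega).smul_mem c ha1,
      fun ρ hρ => by rw [C.pathIntegral_smul, ha2 ρ hρ, mul_zero]⟩

/-- The space `Ω_H(C)` of holomorphic 1-forms. -/
noncomputable def OmegaH : Submodule ℝ (C.E ⊕ C.L → ℝ) where
  carrier := {w | C.IsHolo w}
  zero_mem' := ⟨(C.Omega).zero_mem, fun l => rfl⟩
  add_mem' := by
    rintro a b ⟨ha1, ha2⟩ ⟨hb1, hb2⟩
    exact ⟨(C.Omega).add_mem ha1 hb1,
      fun l => by simp [Pi.add_apply, ha2 l, hb2 l]⟩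
  smul_mem' := by
    rintro c a ⟨ha1, ha2⟩
    exact ⟨(C.Omega).smul_mem c ha1,
      fun l => by simp [Pi.smul_apply, ha2 l]⟩

end TropCurve
namespace TropCurve

variable (C : TropCurve)

lemma mem_Omega_iff (w : C.E ⊕ C.L → ℝ) : w ∈ C.Omega ↔ C.IsOneForm w := Iff.rfl

lemma mem_OmegaH_iff (w : C.E ⊕ C.L → ℝ) : w ∈ C.OmegaH ↔ C.IsHolo w := Iff.rfl

/-- The flow associated to a list of oriented edges. -/
noncomputable def flow (ρ : List C.E) : C.E ⊕ C.L → ℝ :=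
  fun h => match h with
  | Sum.inl e => ((ρ.count e : ℕ) : ℝ) - ((ρ.count (C.rev e) : ℕ) : ℝ)
  | Sum.inr _ => 0

lemma flow_inl (ρ : List C.E) (e : C.E) :
    C.flow ρ (Sum.inl e) = ((ρ.count e : ℕ) : ℝ) - ((ρ.count (C.rev e) : ℕ) : ℝ) := rfl

lemma flow_inr (ρ : List C.E) (l : C.L) : C.flow ρ (Sum.inr l) = 0 := rfl

lemma flow_antisym (ρ : List C.E) (e : C.E) :
    C.flow ρ (Sum.inl (C.rev e)) = - C.flow ρ (Sum.inl e) := by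
  rw [flow_inl, flow_inl, C.rev_invol]
  ring

/-- The incidence linear map. -/
noncomputable def inc : (C.E ⊕ C.L → ℝ) →ₗ[ℝ] (C.V → ℝ) where
  toFun w := fun p => ∑ e : C.E, if C.tgt e = p then w (Sum.inl e) else 0
  map_add' a b := by
    funext p
    rw [Pi.add_apply, ← Finset.sum_add_distrib]
    refine Finset.sum_congr rfl fun e _ => ?_
    by_cases h : C.tgt e = p <;> simp [h]
  map_smul' c a := by
    funext p
    simp only [RingHom.id_apply, Pi.smul_apply, smul_eq_mul, Finset.mul_sum]
    refine Finset.sum_congr rfl fun e _ => ?_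
    by_cases h : C.tgt e = p <;> simp [h]

lemma inc_apply (w : C.E ⊕ C.L → ℝ) (p : C.V) :
    C.inc w p = ∑ e : C.E, if C.tgt e = p then w (Sum.inl e) else 0 := rfl

lemma balance_split (w : C.E ⊕ C.L → ℝ) (p : C.V) :
    ∑ h : C.E ⊕ C.L, (if C.vert h = p then w h else 0)
      = C.inc w p + ∑ l : C.L, (if C.leafV l = p then w (Sum.inr l) else 0) := by
  rw [Fintype.sum_sum_type]
  rfl

lemma sum_ite_single {α β : Type*} [Fintype α] [DecidableEq α] [DecidableEq β]
    (f : α → β) (a : α) (p : β) (c : ℝ) :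
    (∑ x : α, if f x = p then (if x = a then c else 0) else 0)
      = if f a = p then c else 0 := by
  rw [Finset.sum_eq_single a]
  · by_cases h : f a = p <;> simp [h]
  · intro x _ hx
    simp [hx]
  · simp

lemma isPath_cons {e : C.E} {t : List C.E} (h : C.IsPath (e :: t)) : C.IsPath t := by
  intro i hi
  have h2 : i + 1 + 1 < (e :: t).length := by
    simpa using Nat.succ_lt_succ hi
  have := h (i + 1) h2
  simpa using this

lemma flow_cons (e : C.E) (t : List C.E) :
    C.flow (e :: t) = C.flow [e] + C.flow t := by
  funext h
  cases h with
  | inl e' =>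
    simp only [Pi.add_apply, flow_inl, List.count_cons, List.count_nil, List.count_singleton']
    push_cast
    ring
  | inr l => simp [flow_inr]

lemma inc_flow_single (e : C.E) (p : C.V) :
    C.inc (C.flow [e]) p = (if C.tgt e = p then (1:ℝ) else 0)
      - (if C.tgt (C.rev e) = p then (1:ℝ) else 0) := by
  rw [inc_apply]
  have hval : ∀ e' : C.E, C.flow [e] (Sum.inl e')
      = (if e' = e then (1:ℝ) else 0) - (if e' = C.rev e then (1:ℝ) else 0) := by
    intro e'
    rw [flow_inl]
    have h1 : List.count e' [e] = if e' = e then 1 else 0 := by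
      simp [List.count_singleton', eq_comm]
    have h2 : List.count (C.rev e') [e] = if e' = C.rev e then 1 else 0 := by
      have hiff : (e = C.rev e') ↔ (e' = C.rev e) :=
        ⟨fun h => by rw [h, C.rev_invol], fun h => by rw [h, C.rev_invol]⟩
      simp [List.count_singleton', hiff]
    rw [h1, h2]
    by_cases hA : e' = e <;> by_cases hB : e' = C.rev e <;> simp [hA, hB]
  have hsplit : (∑ e' : C.E, if C.tgt e' = p then C.flow [e] (Sum.inl e') else 0)
      = (∑ e' : C.E, if C.tgt e' = p then (if e' = e then (1:ℝ) else 0) else 0)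
        - (∑ e' : C.E, if C.tgt e' = p then (if e' = C.rev e then (1:ℝ) else 0) else 0) := by
    rw [← Finset.sum_sub_distrib]
    refine Finset.sum_congr rfl fun e' _ => ?_
    rw [hval e']
    by_cases h : C.tgt e' = p <;> simp [h]
  rw [hsplit, sum_ite_single C.tgt e p 1, sum_ite_single C.tgt (C.rev e) p 1]

lemma inc_flow : ∀ (ρ : List C.E), C.IsPath ρ → ∀ (hne : ρ ≠ []) (p : C.V),
    C.inc (C.flow ρ) p
      = (if C.tgt (ρ.getLast hne) = p then (1:ℝ) else 0)
        - (if C.tgt (C.rev (ρ.head hne)) = p then (1:ℝ) else 0) := by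
  intro ρ
  induction ρ with
  | nil => intro _ hne; exact absurd rfl hne
  | cons e t ih =>
    intro hρ hne p
    cases t with
    | nil => exact C.inc_flow_single e p
    | cons e₂ t₂ =>
      have htpath : C.IsPath (e₂ :: t₂) := C.isPath_cons hρ
      have hte : C.tgt e = C.tgt (C.rev e₂) := by
        have := hρ 0 (by simp)
        simpa using this
      have hlast : C.tgt ((e :: e₂ :: t₂).getLast hne)
          = C.tgt ((e₂ :: t₂).getLast (by simp)) :=
        congrArg C.tgt (List.getLast_cons (by simp))
      rw [C.flow_cons]
      rw [map_add]
      rw [Pi.add_apply]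
      rw [C.inc_flow_single]
      rw [ih htpath (by simp) p]
      rw [hlast]
      simp only [List.head_cons]
      simp only [hte]
      split_ifs <;> simp [*] <;> norm_num

lemma rev_not_mem {ρ : List C.E}
    (hp : List.Pairwise (fun e e' => e ≠ e' ∧ e ≠ C.rev e') ρ)
    {e : C.E} (he : e ∈ ρ) : C.rev e ∉ ρ := by
  intro hr
  have hsymm : Symmetric (fun a b : C.E => a ≠ b ∧ a ≠ C.rev b) := by
    intro a b hab
    refine ⟨hab.1.symm, fun h => hab.2 ?_⟩
    rw [h, C.rev_invol]
  have h2 := (haveI : Std.Symm (fun a b : C.E => a ≠ b ∧ a ≠ C.rev b) := ⟨fun a b h => hsymm h⟩; hp.forall he hr (C.rev_ne e).symm)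
  exact h2.2 (C.rev_invol e).symm

lemma dualForm_eq_flow (ρ : List C.E)
    (hp : List.Pairwise (fun e e' => e ≠ e' ∧ e ≠ C.rev e') ρ) :
    C.dualForm ρ = C.flow ρ := by
  have hnd : ρ.Nodup := hp.imp fun h => h.1
  funext h
  cases h with
  | inr l => rfl
  | inl e =>
    show (if e ∈ ρ then (1:ℝ) else if C.rev e ∈ ρ then -1 else 0) = _
    rw [flow_inl]
    by_cases h1 : e ∈ ρ
    · have h2 : C.rev e ∉ ρ := C.rev_not_mem hp h1
      rw [List.count_eq_one_of_mem hnd h1, List.count_eq_zero_of_not_mem h2]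
      simp [h1]
    · by_cases h2 : C.rev e ∈ ρ
      · rw [List.count_eq_one_of_mem hnd h2, List.count_eq_zero_of_not_mem h1]
        simp [h1, h2]
      · rw [List.count_eq_zero_of_not_mem h1, List.count_eq_zero_of_not_mem h2]
        simp [h1, h2]

lemma dualForm_isOneForm (ρ : List C.E) (h : C.IsSimpleLoop ρ) :
    C.IsOneForm (C.dualForm ρ) := by
  obtain ⟨⟨hpath, hloop⟩, hne, hpw⟩ := h
  rw [C.dualForm_eq_flow ρ hpw]
  constructor
  · exact fun e => C.flow_antisym ρ e
  · intro p
    rw [C.balance_split]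
    have h1 : C.inc (C.flow ρ) p = 0 := by
      rw [C.inc_flow ρ hpath hne p, hloop hne]
      ring
    rw [h1]
    simp [flow_inr]
lemma dualPathForm_inl (ρ : List C.E) (l₁ l₂ : C.L) (e : C.E) :
    C.dualPathForm ρ l₁ l₂ (Sum.inl e) = C.dualForm ρ (Sum.inl e) := rfl

lemma dualPathForm_inr (ρ : List C.E) (l₁ l₂ : C.L) (l : C.L) :
    C.dualPathForm ρ l₁ l₂ (Sum.inr l)
      = if l = l₁ then 1 else if l = l₂ then -1 else 0 := rfl

lemma dualPathForm_isOneForm (ρ : List C.E) (l₁ l₂ : C.L) (hl : l₁ ≠ l₂)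
    (h : C.IsSimplePathBetween ρ l₁ l₂) :
    C.IsOneForm (C.dualPathForm ρ l₁ l₂) := by
  obtain ⟨hpath, hpw, hends, hnil⟩ := h
  have hedge : ∀ e : C.E, C.dualPathForm ρ l₁ l₂ (Sum.inl e) = C.flow ρ (Sum.inl e) := by
    intro e
    rw [C.dualPathForm_inl, C.dualForm_eq_flow ρ hpw]
  constructor
  · intro e
    rw [hedge, hedge]
    exact C.flow_antisym ρ e
  · intro p
    rw [C.balance_split]
    have hinc : C.inc (C.dualPathForm ρ l₁ l₂) p = C.inc (C.flow ρ) p := by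
      rw [inc_apply, inc_apply]
      refine Finset.sum_congr rfl fun e _ => ?_
      rw [hedge e]
    have hleaf : (∑ l : C.L, if C.leafV l = p then C.dualPathForm ρ l₁ l₂ (Sum.inr l) else 0)
        = (if C.leafV l₁ = p then (1:ℝ) else 0) - (if C.leafV l₂ = p then (1:ℝ) else 0) := by
      have hval : ∀ l : C.L, C.dualPathForm ρ l₁ l₂ (Sum.inr l)
          = (if l = l₁ then (1:ℝ) else 0) - (if l = l₂ then (1:ℝ) else 0) := by
        intro l
        rw [C.dualPathForm_inr]
        by_cases h1 : l = l₁
        · subst h1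
          simp [hl]
        · by_cases h2 : l = l₂ <;> simp [h1, h2, Ne.symm hl]
      have hsplit : (∑ l : C.L, if C.leafV l = p then C.dualPathForm ρ l₁ l₂ (Sum.inr l) else 0)
          = (∑ l : C.L, if C.leafV l = p then (if l = l₁ then (1:ℝ) else 0) else 0)
            - (∑ l : C.L, if C.leafV l = p then (if l = l₂ then (1:ℝ) else 0) else 0) := by
        rw [← Finset.sum_sub_distrib]
        refine Finset.sum_congr rfl fun l _ => ?_
        rw [hval l]
        by_cases hc : C.leafV l = p <;> simp [hc]
      rw [hsplit, sum_ite_single C.leafV l₁ p 1, sum_ite_single C.leafV l₂ p 1]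
    rw [hinc, hleaf]
    rcases eq_or_ne ρ [] with hρnil | hρne
    · subst hρnil
      have hz : C.inc (C.flow []) p = 0 := by
        rw [inc_apply]
        refine Finset.sum_eq_zero fun e _ => ?_
        rw [flow_inl]
        simp
      rw [hz, hnil rfl]
      ring
    · rw [C.inc_flow ρ hpath hρne p, (hends hρne).1, (hends hρne).2]
      ring

section Dimension

/-- The setoid identifying an oriented edge with its reversal. -/
def esetoid : Setoid C.E where
  r e e' := e' = e ∨ e' = C.rev e
  iseqv := by
    constructor
    · exact fun x => Or.inl rfl
    · rintro x y (rfl | rfl)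
      · exact Or.inl rfl
      · exact Or.inr (C.rev_invol x).symm
    · rintro x y z (rfl | rfl) (rfl | rfl)
      · exact Or.inl rfl
      · exact Or.inr rfl
      · exact Or.inr rfl
      · exact Or.inl (C.rev_invol x)

/-- The submodule of functions that are antisymmetric on edges and vanish on leaves. -/
def Asub : Submodule ℝ (C.E ⊕ C.L → ℝ) where
  carrier := {w | (∀ e, w (Sum.inl (C.rev e)) = - w (Sum.inl e)) ∧ ∀ l, w (Sum.inr l) = 0}
  zero_mem' := ⟨fun e => by simp, fun l => rfl⟩
  add_mem' := by
    rintro a b ⟨ha1, ha2⟩ ⟨hb1, hb2⟩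
    refine ⟨fun e => ?_, fun l => ?_⟩
    · simp only [Pi.add_apply, ha1 e, hb1 e]
      ring
    · simp [Pi.add_apply, ha2 l, hb2 l]
  smul_mem' := by
    rintro c a ⟨ha1, ha2⟩
    refine ⟨fun e => ?_, fun l => ?_⟩
    · simp only [Pi.smul_apply, smul_eq_mul, ha1 e]
      ring
    · simp [Pi.smul_apply, ha2 l]

lemma finrank_omegaH_le (hconn : C.Connected) (g : ℕ)
    (hg : 2 * g + 2 * Fintype.card C.V = Fintype.card C.E + 2)
    (p₀ : C.V) :
    Module.finrank ℝ C.OmegaH ≤ g := by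
  classical
  haveI : Fintype (Quotient C.esetoid) := Fintype.ofFinite _
  -- fiber counting: 2 * #Q ≤ #E
  have hcard : 2 * Fintype.card (Quotient C.esetoid) ≤ Fintype.card C.E := by
    have hfib := Finset.card_eq_sum_card_fiberwise
      (f := fun e : C.E => Quotient.mk C.esetoid e)
      (s := Finset.univ) (t := Finset.univ) (fun x _ => Finset.mem_univ _)
    have h2 : ∀ q : Quotient C.esetoid,
        2 ≤ (Finset.univ.filter (fun e : C.E => Quotient.mk C.esetoid e = q)).card := by
      intro q
      have hsub : ({q.out, C.rev q.out} : Finset C.E)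
          ⊆ Finset.univ.filter (fun e : C.E => Quotient.mk C.esetoid e = q) := by
        intro x hx
        rcases Finset.mem_insert.1 hx with rfl | hx
        · exact Finset.mem_filter.2 ⟨Finset.mem_univ _, q.out_eq⟩
        · rw [Finset.mem_singleton] at hx
          subst hx
          refine Finset.mem_filter.2 ⟨Finset.mem_univ _, ?_⟩
          have : Quotient.mk C.esetoid (C.rev q.out) = Quotient.mk C.esetoid q.out :=
            (Quotient.sound (Or.inr rfl)).symm
          rw [this, Quotient.out_eq]
      have hpair : ({q.out, C.rev q.out} : Finset C.E).card = 2 :=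
        Finset.card_pair (C.rev_ne q.out).symm
      calc 2 = ({q.out, C.rev q.out} : Finset C.E).card := hpair.symm
        _ ≤ _ := Finset.card_le_card hsub
    calc 2 * Fintype.card (Quotient C.esetoid)
        = ∑ _q : Quotient C.esetoid, 2 := by
          rw [Finset.sum_const, Finset.card_univ, smul_eq_mul]
          exact mul_comm 2 _
      _ ≤ ∑ q : Quotient C.esetoid,
            (Finset.univ.filter (fun e : C.E => Quotient.mk C.esetoid e = q)).card :=
          Finset.sum_le_sum fun q _ => h2 q
      _ = Fintype.card C.E := hfib.symm
  -- finrank of Asub ≤ #Q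
  let Φ : C.Asub →ₗ[ℝ] (Quotient C.esetoid → ℝ) :=
    { toFun := fun w => fun q => (w : C.E ⊕ C.L → ℝ) (Sum.inl q.out)
      map_add' := fun a b => rfl
      map_smul' := fun c a => rfl }
  have hΦinj : Function.Injective Φ := by
    rw [← LinearMap.ker_eq_bot, LinearMap.ker_eq_bot']
    intro w hw
    have h0 : ∀ q : Quotient C.esetoid, (w : C.E ⊕ C.L → ℝ) (Sum.inl q.out) = 0 :=
      fun q => congrFun hw q
    apply Subtype.ext
    funext h
    have hz : (0 : C.Asub) = ⟨0, C.Asub.zero_mem⟩ := rfl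
    cases h with
    | inr l =>
      rw [w.2.2 l]
      rfl
    | inl e =>
      have hrel := Quotient.mk_out (s := C.esetoid) e
      show (w : C.E ⊕ C.L → ℝ) (Sum.inl e) = 0
      rcases hrel with h | h
      · rw [h]
        exact h0 _
      · rw [h, w.2.1, h0, neg_zero]
  have hA : Module.finrank ℝ C.Asub ≤ Fintype.card (Quotient C.esetoid) := by
    have := LinearMap.finrank_le_finrank_of_injective hΦinj
    rwa [Module.finrank_pi] at this
  -- the incidence map restricted to Asub
  let T : C.Asub →ₗ[ℝ] (C.V → ℝ) := C.inc ∘ₗ C.Asub.subtype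
  -- range of T contains the differences of indicator functions
  have hrange : ∀ q : C.V,
      (fun p => (if q = p then (1:ℝ) else 0) - (if p₀ = p then (1:ℝ) else 0))
        ∈ LinearMap.range T := by
    intro q
    rcases hconn p₀ q with h | ⟨ρ, hne, hpath, hhead, hlast⟩
    · subst h
      refine ⟨0, ?_⟩
      show C.inc ((0 : C.Asub) : C.E ⊕ C.L → ℝ) = _
      rw [Submodule.coe_zero, map_zero]
      funext p
      simp
    · refine ⟨⟨C.flow ρ, ⟨fun e => C.flow_antisym ρ e, fun l => rfl⟩⟩, ?_⟩
      show C.inc (C.flow ρ) = _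
      funext p
      rw [C.inc_flow ρ hpath hne p, hlast, hhead]
  -- a linearly independent family of size #V - 1 in the range of T
  have hVrank : Fintype.card C.V - 1 ≤ Module.finrank ℝ (LinearMap.range T) := by
    let v : {q : C.V // q ≠ p₀} → (C.V → ℝ) :=
      fun q => fun p => (if (q : C.V) = p then (1:ℝ) else 0) - (if p₀ = p then (1:ℝ) else 0)
    have hvind : LinearIndependent ℝ v := by
      rw [Fintype.linearIndependent_iff]
      intro cf hcf q
      have h1 := congrFun hcf (q : C.V)
      simp only [Finset.sum_apply, Pi.smul_apply, smul_eq_mul, Pi.zero_apply] at h1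
      have hpq : p₀ ≠ (q : C.V) := fun h => q.2 h.symm
      rw [Finset.sum_eq_single q] at h1
      · simpa [v, hpq] using h1
      · intro q' _ hq'
        have hne : (q' : C.V) ≠ (q : C.V) := fun h => hq' (Subtype.ext h)
        simp [v, hne, hpq]
      · intro hq
        exact absurd (Finset.mem_univ q) hq
    let v' : {q : C.V // q ≠ p₀} → LinearMap.range T := fun q => ⟨v q, hrange q⟩
    have hv'ind : LinearIndependent ℝ v' := by
      apply LinearIndependent.of_comp (LinearMap.range T).subtype
      exact hvind
    have hcards : Fintype.card {q : C.V // q ≠ p₀} = Fintype.card C.V - 1 := by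
      rw [Fintype.card_subtype_compl, Fintype.card_subtype_eq]
    calc Fintype.card C.V - 1 = Fintype.card {q : C.V // q ≠ p₀} := hcards.symm
      _ ≤ Module.finrank ℝ (LinearMap.range T) := hv'ind.fintype_card_le_finrank
  -- rank-nullity
  have hrn := LinearMap.finrank_range_add_finrank_ker T
  -- OmegaH is the kernel of T
  have hOm : C.OmegaH = Submodule.map C.Asub.subtype (LinearMap.ker T) := by
    ext w
    constructor
    · rintro ⟨⟨h1, h2⟩, h3⟩
      have hinc0 : C.inc w = 0 := by
        funext p
        have hb := h2 p
        rw [C.balance_split] at hb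
        have hl0 : (∑ l : C.L, if C.leafV l = p then w (Sum.inr l) else 0) = 0 :=
          Finset.sum_eq_zero fun l _ => by simp [h3 l]
        rw [hl0, add_zero] at hb
        simpa using hb
      exact ⟨⟨w, ⟨h1, h3⟩⟩, hinc0, rfl⟩
    · rintro ⟨⟨a, ha1, ha2⟩, hker, rfl⟩
      simp only [SetLike.mem_coe, LinearMap.mem_ker] at hker
      have hinc0 : C.inc a = 0 := hker
      show a ∈ C.OmegaH
      refine ⟨⟨ha1, fun p => ?_⟩, ha2⟩
      rw [C.balance_split, congrFun hinc0 p]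
      have hl0 : (∑ l : C.L, if C.leafV l = p then a (Sum.inr l) else 0) = 0 :=
        Finset.sum_eq_zero fun l _ => by simp [ha2 l]
      simp [hl0]
  have hOmrank : Module.finrank ℝ C.OmegaH = Module.finrank ℝ (LinearMap.ker T) := by
    rw [hOm, Submodule.finrank_map_subtype_eq]
  have hVpos : 1 ≤ Fintype.card C.V := Fintype.card_pos_iff.2 ⟨p₀⟩
  omega

end Dimension
lemma pathIntegral_sub (ρ : List C.E) (a b : C.E ⊕ C.L → ℝ) :
    C.pathIntegral ρ (a - b) = C.pathIntegral ρ a - C.pathIntegral ρ b := by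
  simp [pathIntegral, ← Finset.sum_sub_distrib, mul_sub]

lemma pathIntegral_finsum {ι : Type*} (s : Finset ι) (f : ι → (C.E ⊕ C.L → ℝ))
    (ρ : List C.E) :
    C.pathIntegral ρ (∑ i ∈ s, f i) = ∑ i ∈ s, C.pathIntegral ρ (f i) := by
  simp only [pathIntegral, Finset.sum_apply, Finset.mul_sum]
  exact Finset.sum_comm

end TropCurve


/-- Let `C = (G, ℓ)` be a tropical curve with connected graph
`G` of genus `g` (encoded by `2g + 2|V| = |E| + 2`), `l₁ ≠ l₂` leaves, `ρ` a
simple path from `l₁` to `l₂`, and `b₁, …, b_g` simple loops with linearly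
independent dual 1-forms, `M_{ij} = ∫_{b_j} w^{b_i}` the (invertible) period
matrix. Then the unique exact 1-form `w_{l₁,l₂}` with residue `1` at `l₁`, `-1`
at `l₂` and `0` elsewhere equals
`w^ρ - Σ_{i,j} (∫_{b_i} w^ρ) (M⁻¹)_{ij} w^{b_j}`. -/
theorem exact_form_eq_dualPath_sub_holomorphic_correction (C : TropCurve)
    (hconn : C.Connected)
    (g : ℕ) (hg : 2 * g + 2 * Fintype.card C.V = Fintype.card C.E + 2)
    (b : Fin g → List C.E) (hb : ∀ i, C.IsSimpleLoop (b i))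
    (hind : LinearIndependent ℝ fun i => C.dualForm (b i))
    (M : Matrix (Fin g) (Fin g) ℝ)
    (hM : ∀ i j, M i j = C.pathIntegral (b j) (C.dualForm (b i)))
    (hMinv : IsUnit M.det)
    (l₁ l₂ : C.L) (hl : l₁ ≠ l₂)
    (ρ : List C.E) (hρ : C.IsSimplePathBetween ρ l₁ l₂)
    (w : C.E ⊕ C.L → ℝ) (hw : C.IsExact w)
    (hres₁ : w (Sum.inr l₁) = 1) (hres₂ : w (Sum.inr l₂) = -1)
    (hres₀ : ∀ l : C.L, l ≠ l₁ → l ≠ l₂ → w (Sum.inr l) = 0) :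
    w = fun h => C.dualPathForm ρ l₁ l₂ h -
      ∑ i : Fin g, ∑ j : Fin g,
        C.pathIntegral (b i) (C.dualPathForm ρ l₁ l₂) * M⁻¹ i j *
          C.dualForm (b j) h := by
  classical
  set wρ : C.E ⊕ C.L → ℝ := C.dualPathForm ρ l₁ l₂ with hwρdef
  set P : Fin g → ℝ := fun i => C.pathIntegral (b i) wρ with hPdef
  -- the holomorphic correction term
  set corr : C.E ⊕ C.L → ℝ :=
    ∑ i : Fin g, ∑ j : Fin g, (P i * M⁻¹ i j) • C.dualForm (b j) with hcorrdef
  have hcorr_apply : ∀ h : C.E ⊕ C.L,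
      corr h = ∑ i : Fin g, ∑ j : Fin g, P i * M⁻¹ i j * C.dualForm (b j) h := by
    intro h
    rw [hcorrdef]
    simp [Finset.sum_apply]
  -- one-form facts
  have hwρOne : C.IsOneForm wρ := C.dualPathForm_isOneForm ρ l₁ l₂ hl hρ
  have hbOne : ∀ i, C.IsOneForm (C.dualForm (b i)) := fun i => C.dualForm_isOneForm (b i) (hb i)
  have hbH : ∀ i, C.dualForm (b i) ∈ C.OmegaH := fun i => ⟨hbOne i, fun _ => rfl⟩
  -- d = w - wρ + corr
  set d : C.E ⊕ C.L → ℝ := w - wρ + corr with hddef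
  have hdOmega : d ∈ C.Omega := by
    refine C.Omega.add_mem (C.Omega.sub_mem hw.1 hwρOne) ?_
    exact Submodule.sum_mem _ fun i _ => Submodule.sum_mem _ fun j _ =>
      C.Omega.smul_mem _ (hbOne j)
  have hdres : ∀ l : C.L, d (Sum.inr l) = 0 := by
    intro l
    have hcz : corr (Sum.inr l) = 0 := by
      rw [hcorr_apply]
      refine Finset.sum_eq_zero fun i _ => Finset.sum_eq_zero fun j _ => ?_
      show P i * M⁻¹ i j * C.dualForm (b j) (Sum.inr l) = 0
      show P i * M⁻¹ i j * 0 = 0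
      ring
    have : d (Sum.inr l) = w (Sum.inr l) - wρ (Sum.inr l) + corr (Sum.inr l) := rfl
    rw [this, hcz, hwρdef, C.dualPathForm_inr]
    by_cases h1 : l = l₁
    · subst h1
      simp [hres₁]
    · by_cases h2 : l = l₂
      · subst h2
        simp [h1, hres₂]
      · simp [h1, h2, hres₀ l h1 h2]
  have hdH : d ∈ C.OmegaH := ⟨hdOmega, hdres⟩
  -- OmegaH has dimension at most g, so the dual forms of the b i span it
  have hle : Module.finrank ℝ C.OmegaH ≤ g := C.finrank_omegaH_le hconn g hg (C.leafV l₁)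
  set B : Fin g → C.OmegaH := fun i => ⟨C.dualForm (b i), hbH i⟩ with hBdef
  have hBind : LinearIndependent ℝ B := by
    apply LinearIndependent.of_comp C.OmegaH.subtype
    exact hind
  have hge : g ≤ Module.finrank ℝ C.OmegaH := by
    simpa using hBind.fintype_card_le_finrank
  have hdim : Fintype.card (Fin g) = Module.finrank ℝ C.OmegaH := by
    simp [le_antisymm hge hle]
  have hspan := hBind.span_eq_top_of_card_eq_finrank' hdim
  have hmem : (⟨d, hdH⟩ : C.OmegaH) ∈ Submodule.span ℝ (Set.range B) := by
    rw [hspan]; trivial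
  obtain ⟨a, ha⟩ := (Submodule.mem_span_range_iff_exists_fun ℝ).1 hmem
  have haF : ∑ i : Fin g, a i • C.dualForm (b i) = d := by
    have := congrArg (Subtype.val) ha
    simpa [hBdef] using this
  -- integrals of d along the loops b k vanish
  have hintd : ∀ k : Fin g, C.pathIntegral (b k) d = 0 := by
    intro k
    have h1 : C.pathIntegral (b k) w = 0 := hw.2 (b k) (hb k).1
    have hcorrint : C.pathIntegral (b k) corr = P k := by
      rw [hcorrdef, C.pathIntegral_finsum]
      have : ∀ i : Fin g, C.pathIntegral (b k) (∑ j : Fin g, (P i * M⁻¹ i j) • C.dualForm (b j))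
          = ∑ j : Fin g, P i * M⁻¹ i j * M j k := by
        intro i
        rw [C.pathIntegral_finsum]
        refine Finset.sum_congr rfl fun j _ => ?_
        rw [C.pathIntegral_smul, hM j k]
      rw [Finset.sum_congr rfl fun i _ => this i]
      have h2 : ∀ i : Fin g, ∑ j : Fin g, P i * M⁻¹ i j * M j k
          = P i * (if i = k then 1 else 0) := by
        intro i
        simp only [mul_assoc]
        rw [← Finset.mul_sum]
        congr 1
        calc ∑ j : Fin g, M⁻¹ i j * M j k = (M⁻¹ * M) i k := (Matrix.mul_apply).symm
          _ = (1 : Matrix (Fin g) (Fin g) ℝ) i k := by rw [Matrix.nonsing_inv_mul M hMinv]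
          _ = if i = k then 1 else 0 := Matrix.one_apply
      rw [Finset.sum_congr rfl fun i _ => h2 i]
      rw [Finset.sum_eq_single k (fun i _ hik => by simp [hik])
        (fun hk => absurd (Finset.mem_univ k) hk)]
      simp
    have hsub : C.pathIntegral (b k) (w - wρ) = -P k := by
      rw [C.pathIntegral_sub, h1, hPdef]
      ring
    have : C.pathIntegral (b k) d = C.pathIntegral (b k) (w - wρ) + C.pathIntegral (b k) corr := by
      rw [hddef, C.pathIntegral_add]
    rw [this, hsub, hcorrint]
    ring
  -- hence the coefficients vanish
  have hcoeff : ∀ k : Fin g, ∑ i : Fin g, M i k * a i = 0 := by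
    intro k
    have h3 : C.pathIntegral (b k) d = ∑ i : Fin g, a i * M i k := by
      rw [← haF, C.pathIntegral_finsum]
      refine Finset.sum_congr rfl fun i _ => ?_
      rw [C.pathIntegral_smul, hM i k]
    have h4 := hintd k
    rw [h3] at h4
    rw [← h4]
    refine Finset.sum_congr rfl fun i _ => mul_comm _ _
  have ha0 : a = 0 := by
    set N : Matrix (Fin g) (Fin g) ℝ := M.transpose with hNdef
    have hN : N.mulVec a = 0 := by
      funext k
      have hNk : N.mulVec a k = ∑ i : Fin g, M i k * a i := by
        simp [Matrix.mulVec, dotProduct, hNdef, Matrix.transpose_apply]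
      rw [hNk, hcoeff k]
      rfl
    have hdet : IsUnit N.det := by
      rw [hNdef, Matrix.det_transpose]
      exact hMinv
    have h5 : N⁻¹.mulVec (N.mulVec a) = a := by
      rw [Matrix.mulVec_mulVec, Matrix.nonsing_inv_mul _ hdet, Matrix.one_mulVec]
    rw [hN, Matrix.mulVec_zero] at h5
    exact h5.symm
  have hd0 : d = 0 := by
    rw [← haF, ha0]
    simp
  funext h
  have h6 : w h - wρ h + corr h = 0 := by
    have h7 : d h = 0 := by rw [hd0]; rfl
    rw [hddef] at h7
    simpa using h7
  show w h = wρ h - ∑ i : Fin g, ∑ j : Fin g,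
      C.pathIntegral (b i) wρ * M⁻¹ i j * C.dualForm (b j) h
  have h8 : corr h = ∑ i : Fin g, ∑ j : Fin g,
      C.pathIntegral (b i) wρ * M⁻¹ i j * C.dualForm (b j) h := by
    rw [hcorr_apply h]
  rw [← h8]
  linarith
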